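/- arXiv:1608.02463 — 4 statements merged into one kernel-verified Lean document; each statement's English description precedes it below -/
import Mathlib

section
/- Let μ be a finite Borel measure on [a,b] with a,b ∈ spt μ. Then there exists a constant C > 0 such that for every f ∈ W^1_2(a,b) ∩ C[a,b], one has ‖f‖_∞ ≤ C (‖f'‖²_{L²(a,b)} + ‖f‖²_{L²([a,b],μ)})^{1/2}. -/
open MeasureTheory Set

/-!
Since `f²` is continuous on `[a,b]`, it attains its minimum at some `y`, and
`μ([a,b]) f(y)² ≤ ∫ f² dμ`; here `μ([a,b]) > 0` because `a ∈ spt μ`. For any `x`,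
`|f x - f y| ≤ ∫ |f'| ≤ √(b - a) ‖f'‖₂` by Cauchy–Schwarz, and the two bounds add up.
-/

theorem integral_abs_le_sqrt_integral_sq_mul_sqrt_measureReal {α : Type*} [MeasurableSpace α]
    {μ : Measure α} [IsFiniteMeasure μ] {g : α → ℝ} (hg : MemLp g 2 μ) :
    ∫ t, |g t| ∂μ ≤ √(∫ t, g t ^ 2 ∂μ) * √(μ.real univ) := by
  have holder := integral_mul_norm_le_Lp_mul_Lq (μ := μ) Real.HolderConjugate.two_two
    (by rwa [ENNReal.ofReal_ofNat]) (memLp_const (1 : ℝ))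
  have sq_rpow (t : ℝ) : |t| ^ (2 : ℝ) = t ^ 2 := by
    rw [Real.rpow_two, sq_abs]
  simp only [Real.norm_eq_abs, abs_one, mul_one, Real.one_rpow, integral_const, smul_eq_mul,
    sq_rpow] at holder
  simpa only [Real.sqrt_eq_rpow, one_div] using holder

theorem exists_measureReal_mul_le_integral {X : Type*} [TopologicalSpace X] [T2Space X]
    [MeasurableSpace X] [OpensMeasurableSpace X] {μ : Measure X} [IsFiniteMeasure μ] {K : Set X}
    {g : X → ℝ} (hK : IsCompact K) (hKne : K.Nonempty) (hg : ContinuousOn g K) (hμK : μ Kᶜ = 0) :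
    ∃ y ∈ K, μ.real K * g y ≤ ∫ t, g t ∂μ := by
  obtain ⟨y, hy, hmin⟩ := hK.exists_isMinOn hKne hg
  refine ⟨y, hy, ?_⟩
  have h := setIntegral_ge_of_const_le_real hK.measurableSet (measure_ne_top μ K) hmin
    (hg.integrableOn_compact hK)
  rwa [Measure.restrict_eq_self_of_ae_mem (ae_iff.mpr hμK), mul_comm] at h

theorem abs_sub_le_sqrt_mul_sqrt_integral_sq {a b : ℝ} (hab : a ≤ b) {f f' : ℝ → ℝ}
    (hf' : MemLp f' 2 (volume.restrict (Ioo a b)))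
    (hFTC : ∀ x ∈ Icc a b, f x = f a + ∫ t in a..x, f' t) {x y : ℝ}
    (hx : x ∈ Icc a b) (hy : y ∈ Icc a b) :
    |f x - f y| ≤ √(b - a) * √(∫ t in Ioo a b, f' t ^ 2) := by
  have hint : IntegrableOn f' (Icc a b) :=
    (integrableOn_Icc_iff_integrableOn_Ioo).mpr (hf'.integrable one_le_two)
  have hint_from_a {z : ℝ} (hz : z ∈ Icc a b) : IntervalIntegrable f' volume a z :=
    (hint.mono_set (uIcc_subset_Icc (left_mem_Icc.mpr hab) hz)).intervalIntegrable
  have hdiff : f x - f y = ∫ t in y..x, f' t := by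
    rw [hFTC x hx, hFTC y hy, ← intervalIntegral.integral_interval_sub_left (hint_from_a hx)
      (hint_from_a hy)]
    ring
  have hCS := integral_abs_le_sqrt_integral_sq_mul_sqrt_measureReal hf'
  rw [measureReal_restrict_apply_univ, Real.volume_real_Ioo_of_le hab] at hCS
  calc |f x - f y| = ‖∫ t in y..x, f' t‖ := by rw [hdiff, Real.norm_eq_abs]
    _ ≤ ∫ t in uIoc y x, ‖f' t‖ := intervalIntegral.norm_integral_le_integral_norm_uIoc
    _ ≤ ∫ t in Icc a b, |f' t| :=
        setIntegral_mono_set hint.abs (.of_forall fun t => abs_nonneg _)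
          (.of_forall fun t ht => uIcc_subset_Icc hy hx (uIoc_subset_uIcc ht))
    _ = ∫ t in Ioo a b, |f' t| := integral_Icc_eq_integral_Ioo
    _ ≤ √(b - a) * √(∫ t in Ioo a b, f' t ^ 2) := by rwa [mul_comm]

theorem sup_norm_estimate_general (a b : ℝ) (hab : a < b) (μ : Measure ℝ) [IsFiniteMeasure μ]
    (hμc : μ (Set.Icc a b)ᶜ = 0)
    (hsa : ∀ ε > 0, 0 < μ (Set.Ico a (a + ε))) :
    ∃ C > (0:ℝ), ∀ f f' : ℝ → ℝ,
      ContinuousOn f (Set.Icc a b) →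
      MemLp f' 2 (volume.restrict (Set.Ioo a b)) →
      (∀ x ∈ Set.Icc a b, f x = f a + ∫ t in a..x, f' t) →
      ∀ x ∈ Set.Icc a b,
        |f x| ≤ C * Real.sqrt ((∫ t in Set.Ioo a b, (f' t) ^ 2)
                      + ∫ t, (f t) ^ 2 ∂μ) := by
  set M := μ.real (Icc a b)
  have hM : 0 < M := by
    have hIco := hsa (b - a) (sub_pos.mpr hab)
    rw [add_sub_cancel] at hIco
    exact ENNReal.toReal_pos (hIco.trans_le (measure_mono Ico_subset_Icc_self)).ne'
      (measure_ne_top μ _)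
  refine ⟨√(b - a) + 1 / √M, by positivity, fun f f' hf hf' hFTC x hx => ?_⟩
  set A := ∫ t in Ioo a b, f' t ^ 2
  set B := ∫ t, f t ^ 2 ∂μ
  have hA : 0 ≤ A := integral_nonneg fun t => sq_nonneg _
  have hB : 0 ≤ B := integral_nonneg fun t => sq_nonneg _
  obtain ⟨y, hy, hyB⟩ := exists_measureReal_mul_le_integral isCompact_Icc
    (nonempty_Icc.mpr hab.le) (hf.pow 2) hμc
  have hfy : |f y| ≤ √B / √M := by
    rw [← Real.sqrt_sq_eq_abs, ← Real.sqrt_div hB]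
    exact Real.sqrt_le_sqrt ((le_div_iff₀' hM).mpr hyB)
  calc |f x| ≤ |f y| + |f x - f y| := by simpa using abs_add_le (f y) (f x - f y)
    _ ≤ √B / √M + √(b - a) * √A :=
        add_le_add hfy (abs_sub_le_sqrt_mul_sqrt_integral_sq hab.le hf' hFTC hx hy)
    _ ≤ √(A + B) / √M + √(b - a) * √(A + B) := by gcongr <;> linarith
    _ = (√(b - a) + 1 / √M) * √(A + B) := by ring

/-- **Sobolev-type sup-norm estimate.**
Let `μ` be a finite Borel measure on `[a,b]` with `a, b ∈ spt μ`. Then there is `C > 0`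
such that every `f ∈ W^1_2(a,b) ∩ C[a,b]` (encoded via a continuous representative `f`
with weak derivative `f' ∈ L²(a,b)`, related by the fundamental theorem of calculus)
satisfies `‖f‖_∞ ≤ C (‖f'‖²_{L²(a,b)} + ‖f‖²_{L²([a,b],μ)})^{1/2}`. -/
theorem sup_norm_estimate (a b : ℝ) (hab : a < b) (μ : Measure ℝ) [IsFiniteMeasure μ]
    (hμc : μ (Set.Icc a b)ᶜ = 0)
    (hsa : ∀ ε > 0, 0 < μ (Set.Ico a (a + ε)))
    (hsb : ∀ ε > 0, 0 < μ (Set.Ioc (b - ε) b)) :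
    ∃ C > (0:ℝ), ∀ f f' : ℝ → ℝ,
      ContinuousOn f (Set.Icc a b) →
      MemLp f' 2 (volume.restrict (Set.Ioo a b)) →
      (∀ x ∈ Set.Icc a b, f x = f a + ∫ t in a..x, f' t) →
      ∀ x ∈ Set.Icc a b,
        |f x| ≤ C * Real.sqrt ((∫ t in Set.Ioo a b, (f' t) ^ 2)
                      + ∫ t, (f t) ^ 2 ∂μ) :=
  sup_norm_estimate_general a b hab μ hμc hsa
end

section
/- Let μ be a finite Borel measure on [a,b] with a ∈ spt μ. Then for every r ∈ (0, b−a] and every f ∈ W^1_2(a,b) ∩ C[a,b], one has |f(a)| ≤ r^{1/2} ‖f'‖_{L²(a,a+r)} + ‖f‖_{L²([a,a+r],μ)} · μ([a,a+r])^{−1/2}. -/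
/-!
By Cauchy–Schwarz, `|f a - f x| ≤ √r ‖f'‖_{L²(a,a+r)}` for every `x ∈ [a, a+r]`, so `|f|` stays
above `c := |f a| - √r ‖f'‖_{L²(a,a+r)}` on `[a, a+r]`. A function whose absolute value is at
least `c` on a set of positive finite `μ`-measure has `μ`-root mean square at least `c` there,
and that root mean square is the last term of the estimate.
-/

open MeasureTheory Set

section RootMeanSquare

variable {α : Type*} [MeasurableSpace α] {ν : Measure α} [IsFiniteMeasure ν] {g : α → ℝ}

theorem abs_integral_le_sqrt_measureReal_univ_mul_sqrt_integral_sq (hg : MemLp g 2 ν) :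
    |∫ x, g x ∂ν| ≤ √(ν.real univ) * √(∫ x, g x ^ 2 ∂ν) := by
  have hHolder := integral_mul_le_Lp_mul_Lq_of_nonneg (μ := ν) Real.HolderConjugate.two_two
    (f := fun x => |g x|) (g := fun _ => (1 : ℝ)) (.of_forall fun _ => abs_nonneg _)
    (.of_forall fun _ => zero_le_one) (by rw [ENNReal.ofReal_ofNat]; exact hg.abs)
    (by rw [ENNReal.ofReal_ofNat]; exact memLp_const 1)
  have hsq : ∀ x, |g x| ^ (2 : ℝ) = g x ^ 2 := fun x => by
    rw [Real.rpow_two, sq_abs]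
  simp only [mul_one, Real.one_rpow, integral_const, smul_eq_mul, hsq, ← Real.sqrt_eq_rpow]
    at hHolder
  calc |∫ x, g x ∂ν| ≤ ∫ x, |g x| ∂ν := abs_integral_le_integral_abs
    _ ≤ _ := hHolder
    _ = _ := mul_comm _ _

theorem le_sqrt_integral_sq_mul_measureReal_univ_rpow [NeZero ν] {c : ℝ}
    (hg : Integrable (fun x => g x ^ 2) ν) (hc : ∀ᵐ x ∂ν, c ≤ |g x|) :
    c ≤ √(∫ x, g x ^ 2 ∂ν) * ν.real univ ^ (-(1 : ℝ) / 2) := by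
  have hm := measureReal_univ_pos (μ := ν)
  have hrpow : ν.real univ ^ (-(1 : ℝ) / 2) = (√(ν.real univ))⁻¹ := by
    rw [neg_div, Real.rpow_neg hm.le, Real.sqrt_eq_rpow, one_div]
  rw [hrpow, ← div_eq_mul_inv, ← Real.sqrt_div' _ hm.le]
  rcases le_or_gt c 0 with hc0 | hc0
  · exact hc0.trans (Real.sqrt_nonneg _)
  have hmass : c ^ 2 * ν.real univ ≤ ∫ x, g x ^ 2 ∂ν := by
    calc c ^ 2 * ν.real univ = ∫ _, c ^ 2 ∂ν := by simp [mul_comm]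
      _ ≤ ∫ x, g x ^ 2 ∂ν := integral_mono_ae (integrable_const _) hg <| hc.mono fun x hx => by
          simpa [sq_abs] using pow_le_pow_left₀ hc0.le hx 2
  have hS : 0 ≤ ∫ x, g x ^ 2 ∂ν := integral_nonneg fun _ => sq_nonneg _
  rwa [Real.le_sqrt hc0.le (div_nonneg hS hm.le), le_div_iff₀ hm]

end RootMeanSquare

theorem abs_intervalIntegral_le_sqrt_mul_sqrt_integral_sq {g : ℝ → ℝ} {a x : ℝ} (hax : a ≤ x)
    (hg : MemLp g 2 (volume.restrict (Ioo a x))) :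
    |∫ t in a..x, g t| ≤ √(x - a) * √(∫ t in Ioo a x, g t ^ 2) := by
  rw [intervalIntegral.integral_of_le hax, ← integral_Ioc_eq_integral_Ioo]
  rw [Measure.restrict_congr_set Ioo_ae_eq_Ioc] at hg
  simpa [measureReal_restrict_apply_univ, Real.volume_real_Ioc_of_le hax] using
    abs_integral_le_sqrt_measureReal_univ_mul_sqrt_integral_sq hg

theorem abs_le_abs_add_sqrt_mul_sqrt_integral_sq_of_eq_add_intervalIntegral {f g : ℝ → ℝ}
    {a x y : ℝ} (hax : a ≤ x) (hxy : x ≤ y) (hg : MemLp g 2 (volume.restrict (Ioo a y)))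
    (hfx : f x = f a + ∫ t in a..x, g t) :
    |f a| ≤ |f x| + √(y - a) * √(∫ t in Ioo a y, g t ^ 2) := by
  have hsub : Ioo a x ⊆ Ioo a y := Ioo_subset_Ioo_right hxy
  have hCS := abs_intervalIntegral_le_sqrt_mul_sqrt_integral_sq hax
    (hg.mono_measure (Measure.restrict_mono hsub le_rfl))
  have hmono : ∫ t in Ioo a x, g t ^ 2 ≤ ∫ t in Ioo a y, g t ^ 2 :=
    setIntegral_mono_set hg.integrable_sq (.of_forall fun _ => sq_nonneg _) hsub.eventuallyLE
  calc |f a| = |f x - ∫ t in a..x, g t| := by rw [hfx, add_sub_cancel_right]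
    _ ≤ |f x| + |∫ t in a..x, g t| := abs_sub _ _
    _ ≤ |f x| + √(y - a) * √(∫ t in Ioo a y, g t ^ 2) := by
      gcongr
      refine hCS.trans (mul_le_mul ?_ ?_ (Real.sqrt_nonneg _) (Real.sqrt_nonneg _)) <;>
        gcongr

theorem boundary_value_estimate_general (a b : ℝ) (μ : Measure ℝ) [IsFiniteMeasure μ]
    (hsa : ∀ ε > 0, 0 < μ (Set.Ico a (a + ε)))
    (r : ℝ) (hr0 : 0 < r) (hr : r ≤ b - a)
    (f f' : ℝ → ℝ)
    (hf : ContinuousOn f (Set.Icc a b))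
    (hf' : MemLp f' 2 (volume.restrict (Set.Ioo a b)))
    (hftc : ∀ x ∈ Set.Icc a b, f x = f a + ∫ t in a..x, f' t) :
    |f a| ≤ Real.sqrt r * Real.sqrt (∫ t in Set.Ioo a (a + r), (f' t) ^ 2)
      + Real.sqrt (∫ t in Set.Icc a (a + r), (f t) ^ 2 ∂μ)
        * (μ (Set.Icc a (a + r))).toReal ^ (-(1:ℝ)/2) := by
  have har : Icc a (a + r) ⊆ Icc a b := Icc_subset_Icc_right (by linarith)
  have hf'r : MemLp f' 2 (volume.restrict (Ioo a (a + r))) :=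
    hf'.mono_measure (Measure.restrict_mono (Ioo_subset_Ioo_right (by linarith)) le_rfl)
  have hdrop : ∀ x ∈ Icc a (a + r),
      |f a| - √r * √(∫ t in Ioo a (a + r), f' t ^ 2) ≤ |f x| := fun x hx => by
    have := abs_le_abs_add_sqrt_mul_sqrt_integral_sq_of_eq_add_intervalIntegral hx.1 hx.2 hf'r
      (hftc x (har hx))
    rw [add_sub_cancel_left] at this
    linarith
  have : NeZero (μ.restrict (Icc a (a + r))) := ⟨by
    simpa using ((hsa r hr0).trans_le (measure_mono Ico_subset_Icc_self)).ne'⟩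
  have hrms := le_sqrt_integral_sq_mul_measureReal_univ_rpow
    (((hf.mono har).pow 2).integrableOn_compact (μ := μ) isCompact_Icc)
    (ae_restrict_of_forall_mem measurableSet_Icc hdrop)
  rw [measureReal_restrict_apply_univ, measureReal_def] at hrms
  linarith

/-- **Boundary value estimate.**
Let `μ` be a finite Borel measure on `[a,b]` with `a ∈ spt μ` (so `μ([a,a+r]) > 0` for all
`r > 0`).  Then for every `r ∈ (0, b-a]` and every `f ∈ W^1_2(a,b) ∩ C[a,b]` (encoded via a
continuous representative `f` with weak derivative `f'`),
`|f(a)| ≤ r^{1/2} ‖f'‖_{L²(a,a+r)} + ‖f‖_{L²([a,a+r],μ)} μ([a,a+r])^{-1/2}`. -/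
theorem boundary_value_estimate (a b : ℝ) (hab : a < b) (μ : Measure ℝ) [IsFiniteMeasure μ]
    (hμc : μ (Set.Icc a b)ᶜ = 0)
    (hsa : ∀ ε > 0, 0 < μ (Set.Ico a (a + ε)))
    (r : ℝ) (hr0 : 0 < r) (hr : r ≤ b - a)
    (f f' : ℝ → ℝ)
    (hf : ContinuousOn f (Set.Icc a b))
    (hf' : MemLp f' 2 (volume.restrict (Set.Ioo a b)))
    (hftc : ∀ x ∈ Set.Icc a b, f x = f a + ∫ t in a..x, f' t) :
    |f a| ≤ Real.sqrt r * Real.sqrt (∫ t in Set.Ioo a (a + r), (f' t) ^ 2)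
      + Real.sqrt (∫ t in Set.Icc a (a + r), (f t) ^ 2 ∂μ)
        * (μ (Set.Icc a (a + r))).toReal ^ (-(1:ℝ)/2) :=
  boundary_value_estimate_general a b μ hsa r hr0 hr f f' hf hf' hftc
end

section
/- Let μ be a finite Borel measure on [a,b] with a,b ∈ spt μ and μ({a,b}) = 0. Then the restriction of the canonical map κ : W^1_2(a,b) ∩ C[a,b] → L²([a,b],μ), κf = f, to W^1_{2,μ}(a,b) is injective. -/
open MeasureTheory Set

/-- Membership in `W^1_{2,μ}(a,b) = W^1_2(a,b) ∩ C_μ[a,b]`:  `f` is continuous on `[a,b]`,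
has a weak derivative in `L²(a,b)` (encoded via the fundamental theorem of calculus), and
is affine linear on the connected components of `[a,b] \ spt μ` (encoded as: affine on every
subinterval of `μ`-measure zero). -/
def MemW12mu (a b : ℝ) (μ : Measure ℝ) (f : ℝ → ℝ) : Prop :=
  ContinuousOn f (Set.Icc a b) ∧
  (∃ f' : ℝ → ℝ, MemLp f' 2 (volume.restrict (Set.Ioo a b)) ∧
     ∀ x ∈ Set.Icc a b, f x = f a + ∫ t in a..x, f' t) ∧
  (∀ c d : ℝ, a ≤ c → c < d → d ≤ b → μ (Set.Ioo c d) = 0 →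
     ∃ m q : ℝ, ∀ x ∈ Set.Icc c d, f x = m * x + q)

/-!
Continuous functions that agree `μ`-a.e. agree on `spt μ`, in particular at `a` and `b`. If
`f x ≠ g x`, the maximal open interval `(c, d) ∋ x` on which `f ≠ g` is `μ`-null, so `f` and `g`
are affine on `[c, d]`; as they agree at `c` and `d`, they agree at `x`.
-/

open Filter Topology in
theorem MeasureTheory.Measure.eq_of_mem_support_of_ae_eq {X Y : Type*} [TopologicalSpace X]
    [MeasurableSpace X] [TopologicalSpace Y] [T2Space Y] {μ : Measure X} {s : Set X} {x : X}
    {f g : X → Y} (hs : μ sᶜ = 0) (hx : x ∈ μ.support) (hf : ContinuousWithinAt f s x)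
    (hg : ContinuousWithinAt g s x) (hfg : f =ᵐ[μ] g) : f x = g x := by
  have hne : NeBot (𝓝 x ⊓ ae μ) := by
    refine inf_neBot_iff.2 fun U hU V hV => nonempty_of_measure_ne_zero (μ := μ) ?_
    rw [measure_inter_conull hV]
    exact ((Measure.mem_support_iff_forall x).1 hx U hU).ne'
  have hle : 𝓝 x ⊓ ae μ ≤ 𝓝[s] x := inf_le_inf_left _ (le_principal_iff.2 hs)
  exact tendsto_nhds_unique_of_eventuallyEq (hf.mono_left hle) (hg.mono_left hle)
    (hfg.filter_mono inf_le_right)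

theorem MeasureTheory.Measure.mem_support_of_forall_Ico_pos {μ : Measure ℝ} {a : ℝ}
    (h : ∀ ε > 0, 0 < μ (Ico a (a + ε))) : a ∈ μ.support := by
  refine (Measure.mem_support_iff_forall a).2 fun U hU => ?_
  obtain ⟨u, hau, hsub⟩ := exists_Ico_subset_of_mem_nhds hU ⟨a + 1, by linarith⟩
  refine (h (u - a) (sub_pos.2 hau)).trans_le (measure_mono ?_)
  simpa using hsub

theorem MeasureTheory.Measure.mem_support_of_forall_Ioc_pos {μ : Measure ℝ} {b : ℝ}
    (h : ∀ ε > 0, 0 < μ (Ioc (b - ε) b)) : b ∈ μ.support := by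
  refine (Measure.mem_support_iff_forall b).2 fun U hU => ?_
  obtain ⟨l, hlb, hsub⟩ := exists_Ioc_subset_of_mem_nhds hU ⟨b - 1, by linarith⟩
  refine (h (b - l) (sub_pos.2 hlb)).trans_le (measure_mono ?_)
  simpa using hsub

theorem ContinuousOn.isClosed_inter_setOf_eq {X Y : Type*} [TopologicalSpace X]
    [TopologicalSpace Y] [T2Space Y] {f g : X → Y} {s : Set X} (hf : ContinuousOn f s)
    (hg : ContinuousOn g s) (hs : IsClosed s) : IsClosed (s ∩ {x | f x = g x}) :=
  (hf.prodMk hg).preimage_isClosed_of_isClosed hs isClosed_diagonal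

theorem IsClosed.exists_Ioo_subset_compl {Z : Set ℝ} (hZ : IsClosed Z) {a b x : ℝ}
    (ha : a ∈ Z) (hb : b ∈ Z) (hax : a ≤ x) (hxb : x ≤ b) (hx : x ∉ Z) :
    ∃ c ∈ Z, ∃ d ∈ Z, x ∈ Ioo c d ∧ Ioo c d ⊆ Zᶜ := by
  have hbdd : BddAbove (Z ∩ Iic x) := ⟨x, fun _ ht => ht.2⟩
  have hbdd' : BddBelow (Z ∩ Ici x) := ⟨x, fun _ ht => ht.2⟩
  obtain ⟨hcZ, hcx⟩ := (hZ.inter isClosed_Iic).csSup_mem ⟨a, ha, hax⟩ hbdd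
  obtain ⟨hdZ, hxd⟩ := (hZ.inter isClosed_Ici).csInf_mem ⟨b, hb, hxb⟩ hbdd'
  refine ⟨_, hcZ, _, hdZ, ⟨hcx.lt_of_ne fun h => hx (h ▸ hcZ),
    hxd.lt_of_ne' fun h => hx (h ▸ hdZ)⟩, fun t ht htZ => ?_⟩
  rcases le_total t x with htx | hxt
  · exact (le_csSup hbdd ⟨htZ, htx⟩).not_gt ht.1
  · exact (csInf_le hbdd' ⟨htZ, hxt⟩).not_gt ht.2

theorem MemW12mu.eqOn_Icc_of_measure_Ioo_eq_zero {a b c d : ℝ} {μ : Measure ℝ} {f g : ℝ → ℝ}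
    (hf : MemW12mu a b μ f) (hg : MemW12mu a b μ g) (hac : a ≤ c) (hcd : c < d) (hdb : d ≤ b)
    (hμ : μ (Ioo c d) = 0) (hc : f c = g c) (hd : f d = g d) : EqOn f g (Icc c d) := by
  obtain ⟨m₁, q₁, hf⟩ := hf.2.2 c d hac hcd hdb hμ
  obtain ⟨m₂, q₂, hg⟩ := hg.2.2 c d hac hcd hdb hμ
  rw [hf c (left_mem_Icc.2 hcd.le), hg c (left_mem_Icc.2 hcd.le)] at hc
  rw [hf d (right_mem_Icc.2 hcd.le), hg d (right_mem_Icc.2 hcd.le)] at hd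
  obtain rfl : m₁ = m₂ :=
    mul_right_cancel₀ (sub_ne_zero.2 hcd.ne') (by linear_combination hd - hc)
  intro x hx
  rw [hf x hx, hg x hx]
  linarith

theorem kappa_restrict_injective_general (a b : ℝ) (μ : Measure ℝ)
    (hμc : μ (Set.Icc a b)ᶜ = 0)
    (hsa : ∀ ε > 0, 0 < μ (Set.Ico a (a + ε)))
    (hsb : ∀ ε > 0, 0 < μ (Set.Ioc (b - ε) b))
    (f g : ℝ → ℝ) (hf : MemW12mu a b μ f) (hg : MemW12mu a b μ g)
    (hae : f =ᵐ[μ] g) :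
    Set.EqOn f g (Set.Icc a b) := by
  intro x hx
  have hab : a ≤ b := hx.1.trans hx.2
  have heq_of_mem_support {y : ℝ} (hy : y ∈ Icc a b) (hyμ : y ∈ μ.support) : f y = g y :=
    Measure.eq_of_mem_support_of_ae_eq hμc hyμ (hf.1 y hy) (hg.1 y hy) hae
  have ha := heq_of_mem_support (left_mem_Icc.2 hab) (Measure.mem_support_of_forall_Ico_pos hsa)
  have hb := heq_of_mem_support (right_mem_Icc.2 hab) (Measure.mem_support_of_forall_Ioc_pos hsb)
  by_contra hne
  obtain ⟨c, ⟨hc, hfgc⟩, d, ⟨hd, hfgd⟩, hxcd, hgap⟩ :=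
    (hf.1.isClosed_inter_setOf_eq hg.1 isClosed_Icc).exists_Ioo_subset_compl
      ⟨left_mem_Icc.2 hab, ha⟩ ⟨right_mem_Icc.2 hab, hb⟩ hx.1 hx.2 (fun h => hne h.2)
  have hμcd : μ (Ioo c d) = 0 :=
    measure_mono_null (fun t ht hfgt => hgap ht ⟨⟨hc.1.trans ht.1.le, ht.2.le.trans hd.2⟩, hfgt⟩)
      (ae_iff.1 hae)
  exact hne (hf.eqOn_Icc_of_measure_Ioo_eq_zero hg hc.1 (hxcd.1.trans hxcd.2) hd.2 hμcd hfgc hfgd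
    (Ioo_subset_Icc_self hxcd))

/-- **Injectivity of `κ` on `W^1_{2,μ}(a,b)`.**
Let `μ` be a finite Borel measure on `[a,b]` with `a, b ∈ spt μ` and `μ({a,b}) = 0`.
If `f, g ∈ W^1_{2,μ}(a,b)` agree `μ`-a.e., then they agree everywhere on `[a,b]`;
i.e. the canonical map `κ : W^1_2 ∩ C[a,b] → L²([a,b],μ)` is injective on `W^1_{2,μ}`. -/
theorem kappa_restrict_injective (a b : ℝ) (hab : a < b) (μ : Measure ℝ) [IsFiniteMeasure μ]
    (hμc : μ (Set.Icc a b)ᶜ = 0)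
    (hsa : ∀ ε > 0, 0 < μ (Set.Ico a (a + ε)))
    (hsb : ∀ ε > 0, 0 < μ (Set.Ioc (b - ε) b))
    (hab0 : μ {a, b} = 0)
    (f g : ℝ → ℝ) (hf : MemW12mu a b μ f) (hg : MemW12mu a b μ g)
    (hae : f =ᵐ[μ] g) :
    Set.EqOn f g (Set.Icc a b) :=
  kappa_restrict_injective_general a b μ hμc hsa hsb f g hf hg hae
end

section
/- Let X ⊆ ℝⁿ be a sublattice and L a self-adjoint operator on X such that the semigroup (e^{−tL})_{t≥0} is positivity preserving on X. Then for every real x ∈ X, ⟨L|x|, |x|⟩ ≤ ⟨Lx, x⟩. -/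
/-!
Polarizing with `|x| ± x ≥ 0` shows that every matrix `P` positivity preserving on `X` satisfies
`⟨P x, x⟩ ≤ ⟨P |x|, |x|⟩`, because
`2 (⟨P |x|, |x|⟩ - ⟨P x, x⟩) = ⟨P (|x| + x), |x| - x⟩ + ⟨P (|x| - x), |x| + x⟩ ≥ 0`.
Applied to `P = e^{-tL}`, the difference `g t = ⟨e^{-tL}|x|, |x|⟩ - ⟨e^{-tL}x, x⟩` is therefore
nonnegative for `t ≥ 0` and vanishes at `t = 0`, so `g' 0 = ⟨Lx, x⟩ - ⟨L|x|, |x|⟩ ≥ 0`.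
-/

open Matrix

theorem abs_dotProduct_abs {ι : Type*} [Fintype ι] (x : ι → ℝ) : |x| ⬝ᵥ |x| = x ⬝ᵥ x :=
  Finset.sum_congr rfl fun i _ => abs_mul_abs_self (x i)

theorem mulVec_dotProduct_self_le_abs {ι : Type*} [Fintype ι] {X : Submodule ℝ (ι → ℝ)}
    (P : Matrix ι ι ℝ) (hP : ∀ y ∈ X, 0 ≤ y → 0 ≤ P *ᵥ y) {x : ι → ℝ} (hx : x ∈ X)
    (habs : |x| ∈ X) : P *ᵥ x ⬝ᵥ x ≤ P *ᵥ |x| ⬝ᵥ |x| := by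
  have hadd : 0 ≤ |x| + x := neg_le_iff_add_nonneg.1 (neg_le_abs x)
  have hsub : 0 ≤ |x| - x := sub_nonneg.2 (le_abs_self x)
  have h₁ := dotProduct_nonneg_of_nonneg (hP _ (X.add_mem habs hx) hadd) hsub
  have h₂ := dotProduct_nonneg_of_nonneg (hP _ (X.sub_mem habs hx) hsub) hadd
  simp only [mulVec_add, mulVec_sub, add_dotProduct, sub_dotProduct, dotProduct_add,
    dotProduct_sub] at h₁ h₂
  linarith

theorem HasDerivAt.nonneg_of_isMinOn_Ici {f : ℝ → ℝ} {f' a : ℝ} (hf : HasDerivAt f f' a)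
    (hmin : IsMinOn f (Set.Ici a) a) : 0 ≤ f' := by
  have hseg : segment ℝ a (a + 1) ⊆ Set.Ici a := by
    rw [segment_eq_Icc (by linarith)]
    exact Set.Icc_subset_Ici_self
  simpa using hmin.localize.hasFDerivWithinAt_nonneg hf.hasDerivWithinAt.hasFDerivWithinAt
    (mem_posTangentConeAt_of_segment_subset hseg)

section

attribute [local instance] Matrix.linftyOpNormedAddCommGroup Matrix.linftyOpNormedRing
  Matrix.linftyOpNormedAlgebra

theorem hasDerivAt_exp_smul_mulVec_dotProduct {ι : Type*} [Fintype ι] [DecidableEq ι]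
    (A : Matrix ι ι ℝ) (y z : ι → ℝ) (t : ℝ) :
    HasDerivAt (fun s : ℝ => NormedSpace.exp (s • A) *ᵥ y ⬝ᵥ z)
      ((NormedSpace.exp (t • A) * A) *ᵥ y ⬝ᵥ z) t := by
  let F : Matrix ι ι ℝ →ₗ[ℝ] ℝ :=
    { toFun := fun M => M *ᵥ y ⬝ᵥ z
      map_add' := fun M N => by simp only [add_mulVec, add_dotProduct]
      map_smul' := fun c M => by simp only [smul_mulVec, smul_dotProduct, RingHom.id_apply] }
  exact F.toContinuousLinearMap.hasFDerivAt.comp_hasDerivAt t (hasDerivAt_exp_smul_const A t)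

end

theorem beurling_deny_first_general (n : ℕ) (X : Submodule ℝ (Fin n → ℝ))
    (hlat : ∀ x ∈ X, (fun i => |x i|) ∈ X)
    (L : Matrix (Fin n) (Fin n) ℝ)
    (hpos : ∀ t : ℝ, 0 ≤ t → ∀ x ∈ X, (∀ i, 0 ≤ x i) →
      ∀ i, 0 ≤ (NormedSpace.exp ((-t) • L)).mulVec x i) :
    ∀ x ∈ X, L.mulVec (fun i => |x i|) ⬝ᵥ (fun i => |x i|) ≤ L.mulVec x ⬝ᵥ x := by
  intro x hx
  set g : ℝ → ℝ := fun t =>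
    NormedSpace.exp (t • -L) *ᵥ |x| ⬝ᵥ |x| - NormedSpace.exp (t • -L) *ᵥ x ⬝ᵥ x
  have hg₀ : g 0 = 0 := by simp [g, abs_dotProduct_abs]
  have hmin : IsMinOn g (Set.Ici 0) 0 := by
    intro t (ht : 0 ≤ t)
    show g 0 ≤ g t
    rw [hg₀, sub_nonneg, smul_neg, ← neg_smul]
    exact mulVec_dotProduct_self_le_abs _ (fun y hy hy₀ => hpos t ht y hy hy₀) hx (hlat x hx)
  have hderiv : HasDerivAt g ((-L) *ᵥ |x| ⬝ᵥ |x| - (-L) *ᵥ x ⬝ᵥ x) 0 := by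
    have h := (hasDerivAt_exp_smul_mulVec_dotProduct (-L) |x| |x| 0).sub
      (hasDerivAt_exp_smul_mulVec_dotProduct (-L) x x 0)
    rwa [zero_smul, NormedSpace.exp_zero, one_mul] at h
  have hderiv_nonneg := hderiv.nonneg_of_isMinOn_Ici hmin
  rw [neg_mulVec, neg_mulVec, neg_dotProduct, neg_dotProduct] at hderiv_nonneg
  show L *ᵥ |x| ⬝ᵥ |x| ≤ L *ᵥ x ⬝ᵥ x
  linarith

/-- **First Beurling–Deny criterion, finite-dimensional version (necessity).**
Let `X ⊆ ℝⁿ` be a sublattice (closed under componentwise absolute value) and `L` a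
self-adjoint operator on `X` (encoded as a matrix preserving `X`, symmetric with respect
to the standard inner product on `X`) such that the semigroup `(e^{-tL})_{t≥0}` is
positivity preserving on `X`.  Then for every `x ∈ X`, `⟨L|x|, |x|⟩ ≤ ⟨Lx, x⟩`. -/
theorem beurling_deny_first (n : ℕ) (X : Submodule ℝ (Fin n → ℝ))
    (hlat : ∀ x ∈ X, (fun i => |x i|) ∈ X)
    (L : Matrix (Fin n) (Fin n) ℝ)
    (hLX : ∀ x ∈ X, L.mulVec x ∈ X)
    (hLsym : ∀ x ∈ X, ∀ y ∈ X, L.mulVec x ⬝ᵥ y = x ⬝ᵥ L.mulVec y)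
    (hpos : ∀ t : ℝ, 0 ≤ t → ∀ x ∈ X, (∀ i, 0 ≤ x i) →
      ∀ i, 0 ≤ (NormedSpace.exp ((-t) • L)).mulVec x i) :
    ∀ x ∈ X, L.mulVec (fun i => |x i|) ⬝ᵥ (fun i => |x i|) ≤ L.mulVec x ⬝ᵥ x :=
  beurling_deny_first_general n X hlat L hpos
end
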